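/- For 0 < a ≤ 1/2, define ξ_Q(s,a) := (1/2)·s(s−1)·π^{−s/2}·Γ(s/2)·Q(s,a). Then s ↦ ξ_Q(s,a) extends to an entire function of order exactly 1; that is, it is entire, for every ε > 0 there is C with |ξ_Q(s,a)| ≤ C·exp(|s|^{1+ε}) for all s, and there is no such bound with exponent 1−ε for any ε > 0. -/

import Mathlib

open Complex Real Set HurwitzZeta

/-- The quadrilateral zeta function `Q(s,a)`, defined by
`2Q(s,a) = ζ(s,a) + ζ(s,1-a) + Li_s(e^{2πia}) + Li_s(e^{2πi(1-a)})`. -/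
noncomputable def Q (a : ℝ) (s : ℂ) : ℂ :=
  (hurwitzZeta (a : UnitAddCircle) s + hurwitzZeta ((1 - a : ℝ) : UnitAddCircle) s
    + expZeta (a : UnitAddCircle) s + expZeta ((1 - a : ℝ) : UnitAddCircle) s) / 2


/-- The completed quadrilateral zeta function
`ξ_Q(s,a) := (1/2) s (s-1) π^(-s/2) Γ(s/2) Q(s,a)`. -/
noncomputable def xiQ (a : ℝ) (s : ℂ) : ℂ :=
  (1 / 2) * (s * (s - 1)) * (π : ℂ) ^ (-s / 2) * Complex.Gamma (s / 2) * Q a s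

/-!
Since `1 - a ≡ -a` in `ℝ/ℤ`, the odd parts cancel and `Q(s,a)` is the sum of the even Hurwitz
zeta function and the cosine zeta function, so `ξ_Q` is `s(s-1)/2` times the sum of their
completed versions. These are Mellin transforms of theta-type kernels; after subtracting their
constant terms, the kernels decay like `e^{-cx}` at `∞` and, by the functional equation, also at
`0` in the variable `1/x`. With `t^q e^{-ct} ≤ (1 + 2q/c)^q e^{-ct/2}`, the Mellin integrals
are `exp(O(|s| log |s|))`, which gives order at most `1`.

Conversely, at `s = 2m + 2` we have `Γ(s/2) = m!`, and `Q(s,a) ≥ 1` because the term `a^{-s}/2`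
dominates. So `|ξ_Q(2m + 2)| ≥ m!/π^{m+1}`, and this outgrows every `C exp(|s|^{1-ε}) ≤ C e^{2m+2}`.
-/

open scoped Nat
open MeasureTheory Filter Asymptotics Topology

theorem rpow_mul_exp_neg_le {q b c t : ℝ} (hq : 0 ≤ q) (hc : 0 < c) (hb : 2 / c ≤ b)
    (ht : 0 < t) : t ^ q * rexp (-c * t) ≤ (1 + b * q) ^ q * rexp (-(c / 2) * t) := by
  have hb₀ : 0 ≤ b := (div_pos two_pos hc).le.trans hb
  set M := 1 + b * q
  have hM : 0 < M := by positivity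
  -- the tangent line of `log` at `M`; `M` is chosen so that `q / M ≤ c / 2`
  have hlog : Real.log t ≤ Real.log M + t / M := by
    have := Real.log_le_sub_one_of_pos (div_pos ht hM)
    rw [Real.log_div ht.ne' hM.ne'] at this
    linarith
  have hqM : q / M ≤ c / 2 := by
    have : 1 ≤ c / 2 * b := by
      have := mul_le_mul_of_nonneg_left hb (half_pos hc).le
      rwa [show c / 2 * (2 / c) = 1 by field_simp] at this
    rw [div_le_iff₀ hM]
    nlinarith
  have hqt : q * (t / M) ≤ c / 2 * t :=
    calc q * (t / M) = q / M * t := by ring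
      _ ≤ c / 2 * t := by gcongr
  rw [Real.rpow_def_of_pos ht, Real.rpow_def_of_pos hM, ← Real.exp_add, ← Real.exp_add]
  exact Real.exp_le_exp.2 (by nlinarith [mul_le_mul_of_nonneg_left hlog hq])

theorem exists_forall_norm_le_of_isBigO_atTop {E : Type*} [NormedAddCommGroup E]
    {f : ℝ → E} {g : ℝ → ℝ} {a : ℝ} (hf : ContinuousOn f (Ici a)) (hg : ContinuousOn g (Ici a))
    (hg₀ : ∀ x ∈ Ici a, 0 < g x) (hfg : f =O[atTop] g) :
    ∃ C, ∀ x ∈ Ici a, ‖f x‖ ≤ C * g x := by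
  obtain ⟨C, hC⟩ := hfg.bound
  obtain ⟨X, hX⟩ := eventually_atTop.1 hC
  have hcont : ContinuousOn (fun x ↦ ‖f x‖ / g x) (Icc a X) :=
    (hf.norm.div hg fun x hx ↦ (hg₀ x hx).ne').mono Icc_subset_Ici_self
  obtain ⟨D, hD⟩ := isCompact_Icc.exists_bound_of_continuousOn hcont
  refine ⟨max C D, fun x hx ↦ ?_⟩
  have hgx := hg₀ x hx
  rcases le_total x X with h | h
  · have := (le_abs_self _).trans (hD x ⟨hx, h⟩)
    rw [div_le_iff₀ hgx] at this
    exact this.trans (by gcongr; exact le_max_right _ _)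
  · have := hX x h
    rw [Real.norm_of_nonneg hgx.le] at this
    exact this.trans (by gcongr; exact le_max_left _ _)

theorem rpow_mul_le_mul_exp_neg {p q b c K y u : ℝ} (hq : 0 ≤ q) (hc : 0 < c) (hb : 2 / c ≤ b)
    (hy : 1 ≤ y) (hpq : p ≤ q) (hu₀ : 0 ≤ u) (hu : u ≤ K * rexp (-c * y)) :
    y ^ p * u ≤ K * (1 + b * q) ^ q * rexp (-(c / 2) * y) := by
  have hK : 0 ≤ K := nonneg_of_mul_nonneg_left (hu₀.trans hu) (exp_pos _)
  calc y ^ p * u ≤ y ^ q * (K * rexp (-c * y)) := by gcongr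
    _ = K * (y ^ q * rexp (-c * y)) := by ring
    _ ≤ K * ((1 + b * q) ^ q * rexp (-(c / 2) * y)) :=
        mul_le_mul_of_nonneg_left (rpow_mul_exp_neg_le hq hc hb (zero_lt_one.trans_le hy)) hK
    _ = _ := by ring

namespace WeakFEPair

variable {E : Type*} [NormedAddCommGroup E] [NormedSpace ℂ E] (P : WeakFEPair E)

theorem f_modif_of_one_lt {x : ℝ} (hx : 1 < x) : P.f_modif x = P.f x - P.f₀ := by
  simp [f_modif, hx, notMem_Ioo_of_ge hx.le]

theorem f_modif_of_lt_one {x : ℝ} (hx₀ : 0 < x) (hx : x < 1) :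
    P.f_modif x = (P.ε * ↑((1 / x) ^ P.k)) • (P.g (1 / x) - P.g₀) := by
  have hx' : 1 < 1 / x := by rwa [lt_one_div one_pos hx₀, div_one]
  have h := P.hf_modif_FE (1 / x) (by positivity)
  rw [one_div_one_div] at h
  rw [h, g_modif, Pi.add_apply, indicator_of_mem (mem_Ioi.2 hx'),
    indicator_of_notMem (notMem_Ioo_of_ge hx'.le), add_zero]

variable {K b c : ℝ}

theorem norm_cpow_smul_f_modif_le (hc : 0 < c) (hb : 2 / c ≤ b)
    (hf : ∀ x > 1, ‖P.f x - P.f₀‖ ≤ K * rexp (-c * x))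
    (hg : ∀ x > 1, ‖P.g x - P.g₀‖ ≤ K * rexp (-c * x))
    {s : ℂ} {q : ℝ} (hq : |s.re - 1| + P.k ≤ q) {x : ℝ} (hx : 0 < x) :
    ‖(x : ℂ) ^ (s - 1) • P.f_modif x‖ ≤
      (1 + ‖P.ε‖) * rexp (c / 2) * (K * (1 + b * q) ^ q) * rexp (-(c / 2) * x) := by
  have hσ₁ := le_abs_self (s.re - 1)
  have hσ₂ := neg_le_abs (s.re - 1)
  have hq₀ : 0 ≤ q := le_trans (add_nonneg (abs_nonneg _) P.hk.le) hq
  have hK : 0 ≤ K :=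
    nonneg_of_mul_nonneg_left ((norm_nonneg _).trans (hf 2 one_lt_two)) (exp_pos _)
  have hb₀ : 0 ≤ b := (div_pos two_pos hc).le.trans hb
  rw [norm_smul, norm_cpow_eq_rpow_re_of_pos hx, sub_re, one_re]
  rcases lt_trichotomy x 1 with hlt | rfl | hgt
  · have hy : 1 < 1 / x := by rwa [lt_one_div one_pos hx, div_one]
    have hxy : x ^ (s.re - 1) * (1 / x) ^ P.k = (1 / x) ^ (1 - s.re + P.k) := by
      rw [Real.rpow_add (by positivity), one_div, Real.inv_rpow hx.le (1 - s.re),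
        ← Real.rpow_neg hx.le, neg_sub]
    rw [P.f_modif_of_lt_one hx hlt, norm_smul, norm_mul, norm_real,
      Real.norm_of_nonneg (by positivity)]
    calc x ^ (s.re - 1) * (‖P.ε‖ * (1 / x) ^ P.k * ‖P.g (1 / x) - P.g₀‖)
        = ‖P.ε‖ * ((1 / x) ^ (1 - s.re + P.k) * ‖P.g (1 / x) - P.g₀‖) := by
          rw [← hxy]; ring
      _ ≤ ‖P.ε‖ * (K * (1 + b * q) ^ q * rexp (-(c / 2) * (1 / x))) :=
          mul_le_mul_of_nonneg_left (rpow_mul_le_mul_exp_neg hq₀ hc hb hy.le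
            (by linarith [P.hk]) (norm_nonneg _) (hg _ hy)) (norm_nonneg _)
      _ ≤ (1 + ‖P.ε‖) * (K * (1 + b * q) ^ q * (rexp (c / 2) * rexp (-(c / 2) * x))) := by
          rw [← Real.exp_add]
          gcongr
          · linarith
          · nlinarith
      _ = _ := by ring
  · rw [show P.f_modif 1 = 0 by simp [f_modif], norm_zero, mul_zero]
    positivity
  · rw [P.f_modif_of_one_lt hgt]
    refine (rpow_mul_le_mul_exp_neg hq₀ hc hb hgt.le (by linarith [P.hk]) (norm_nonneg _)
      (hf x hgt)).trans ?_
    refine mul_le_mul_of_nonneg_right (le_mul_of_one_le_left (by positivity) ?_) (exp_pos _).le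
    exact one_le_mul_of_one_le_of_one_le (by simp) (Real.one_le_exp (by positivity))

theorem norm_Λ₀_le (hc : 0 < c) (hb : 2 / c ≤ b)
    (hf : ∀ x > 1, ‖P.f x - P.f₀‖ ≤ K * rexp (-c * x))
    (hg : ∀ x > 1, ‖P.g x - P.g₀‖ ≤ K * rexp (-c * x))
    {s : ℂ} {q : ℝ} (hq : |s.re - 1| + P.k ≤ q) :
    ‖P.Λ₀ s‖ ≤ 2 / c * ((1 + ‖P.ε‖) * rexp (c / 2) * (K * (1 + b * q) ^ q)) := by
  set A := (1 + ‖P.ε‖) * rexp (c / 2) * (K * (1 + b * q) ^ q)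
  have hint : IntegrableOn (fun x ↦ A * rexp (-(c / 2) * x)) (Ioi 0) :=
    (exp_neg_integrableOn_Ioi 0 (half_pos hc)).const_mul A
  calc ‖P.Λ₀ s‖ ≤ ∫ x in Ioi 0, A * rexp (-(c / 2) * x) :=
        norm_integral_le_of_norm_le hint <| ae_restrict_of_forall_mem measurableSet_Ioi
          fun x hx ↦ P.norm_cpow_smul_f_modif_le hc hb hf hg hq hx
    _ = 2 / c * A := by
        rw [integral_const_mul, integral_exp_mul_Ioi (by linarith) 0]
        field_simp
        simp

end WeakFEPair

theorem hurwitzEvenFEPair_exp_decay (a : UnitAddCircle) : ∃ K c : ℝ, 0 < c ∧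
    (∀ x > 1, ‖(hurwitzEvenFEPair a).f x - (hurwitzEvenFEPair a).f₀‖ ≤ K * rexp (-c * x)) ∧
    (∀ x > 1, ‖(hurwitzEvenFEPair a).g x - (hurwitzEvenFEPair a).g₀‖ ≤ K * rexp (-c * x)) := by
  obtain ⟨p₁, hp₁, hf⟩ := isBigO_atTop_evenKernel_sub a
  obtain ⟨p₂, hp₂, hg⟩ := isBigO_atTop_cosKernel_sub a
  have hsub : Ici (1 : ℝ) ⊆ Ioi 0 := Ici_subset_Ioi.2 one_pos
  have hexp : ContinuousOn (fun x ↦ rexp (-min p₁ p₂ * x)) (Ici 1) := by fun_prop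
  obtain ⟨K₁, hK₁⟩ := exists_forall_norm_le_of_isBigO_atTop
    (((continuousOn_evenKernel a).mono hsub).sub continuousOn_const) hexp (fun _ _ ↦ exp_pos _)
    (hf.trans (HurwitzKernelBounds.isBigO_exp_neg_mul_of_le (min_le_left p₁ p₂)))
  obtain ⟨K₂, hK₂⟩ := exists_forall_norm_le_of_isBigO_atTop
    (((continuousOn_cosKernel a).mono hsub).sub continuousOn_const) hexp (fun _ _ ↦ exp_pos _)
    (hg.trans (HurwitzKernelBounds.isBigO_exp_neg_mul_of_le (min_le_right p₁ p₂)))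
  refine ⟨max K₁ K₂, min p₁ p₂, lt_min hp₁ hp₂, fun x hx ↦ ?_, fun x hx ↦ ?_⟩
  · have h : (hurwitzEvenFEPair a).f x - (hurwitzEvenFEPair a).f₀ =
        ((evenKernel a x - if a = 0 then 1 else 0 : ℝ) : ℂ) := by
      simp only [hurwitzEvenFEPair, Function.comp_apply]
      split_ifs <;> simp
    rw [h, norm_real]
    exact (hK₁ x (mem_Ici.2 hx.le)).trans (by gcongr; exact le_max_left _ _)
  · have h : (hurwitzEvenFEPair a).g x - (hurwitzEvenFEPair a).g₀ =
        ((cosKernel a x - 1 : ℝ) : ℂ) := by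
      simp [hurwitzEvenFEPair]
    rw [h, norm_real]
    exact (hK₂ x (mem_Ici.2 hx.le)).trans (by gcongr; exact le_max_right _ _)

theorem exists_norm_completedHurwitzZetaEven₀_add_completedCosZeta₀_le (a : UnitAddCircle) :
    ∃ C b : ℝ, 1 ≤ b ∧ ∀ s : ℂ,
      ‖completedHurwitzZetaEven₀ a s + completedCosZeta₀ a s‖ ≤
        C * (1 + b * (‖s‖ + 2)) ^ (‖s‖ + 2) := by
  obtain ⟨K, c, hc, hf, hg⟩ := hurwitzEvenFEPair_exp_decay a
  set P := hurwitzEvenFEPair a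
  refine ⟨(1 + ‖P.ε‖ + (1 + ‖P.symm.ε‖)) * rexp (c / 2) * K / c, max (2 / c) 1,
    le_max_right _ _, fun s ↦ ?_⟩
  have hq : |(s / 2).re - 1| + P.k ≤ ‖s‖ + 2 := by
    have : P.k = 1 / 2 := rfl
    have hre : (s / 2).re = s.re / 2 := by simp
    rw [this, hre]
    have := abs_re_le_norm s
    have := abs_sub (s.re / 2) 1
    rw [abs_div, abs_two, abs_one] at this
    linarith [norm_nonneg s]
  have h₁ := P.norm_Λ₀_le hc (le_max_left _ 1) hf hg hq
  have h₂ := P.symm.norm_Λ₀_le hc (le_max_left _ 1) hg hf hq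
  calc ‖completedHurwitzZetaEven₀ a s + completedCosZeta₀ a s‖
      ≤ ‖P.Λ₀ (s / 2)‖ / 2 + ‖P.symm.Λ₀ (s / 2)‖ / 2 := by
        refine (norm_add_le _ _).trans_eq ?_
        simp [completedHurwitzZetaEven₀, completedCosZeta₀, P]
    _ ≤ _ := by
        refine (add_le_add (div_le_div_of_nonneg_right h₁ zero_le_two)
          (div_le_div_of_nonneg_right h₂ zero_le_two)).trans_eq ?_
        ring

theorem eventually_mul_log_le_rpow {b ε : ℝ} (hb : 0 ≤ b) (hε : 0 < ε) :
    ∀ᶠ r in atTop, 2 * (r + 2) * Real.log (1 + b * (r + 2)) ≤ r ^ (1 + ε) := by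
  have hδ : 0 < ε / 2 := half_pos hε
  set D := 4 * (1 + 2 * b) ^ (ε / 2) / (ε / 2)
  filter_upwards [eventually_ge_atTop 2, (tendsto_rpow_atTop hδ).eventually_ge_atTop D]
    with r hr hrD
  have hr₀ : 0 < r := by linarith
  have hlog : Real.log (1 + b * (r + 2)) ≤ (1 + 2 * b) ^ (ε / 2) * r ^ (ε / 2) / (ε / 2) := by
    rw [← Real.mul_rpow (by positivity) hr₀.le]
    exact (Real.log_le_log (by positivity) (by nlinarith)).trans
      (Real.log_le_rpow_div (by positivity) hδ)
  calc 2 * (r + 2) * Real.log (1 + b * (r + 2))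
      ≤ (4 * r) * ((1 + 2 * b) ^ (ε / 2) * r ^ (ε / 2) / (ε / 2)) := by
        refine mul_le_mul (by linarith) hlog (Real.log_nonneg (by nlinarith)) (by positivity)
    _ = r * r ^ (ε / 2) * D := by ring
    _ ≤ r * r ^ (ε / 2) * r ^ (ε / 2) := by gcongr
    _ = r ^ (1 + ε) := by
        rw [mul_assoc, ← Real.rpow_add hr₀, add_halves, Real.rpow_add hr₀, Real.rpow_one]

theorem exists_one_add_mul_rpow_le_mul_exp_rpow {b ε : ℝ} (hb : 0 ≤ b) (hε : 0 < ε) :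
    ∃ D, ∀ r ≥ 0, (1 + b * (r + 2)) ^ (2 * (r + 2)) ≤ D * rexp (r ^ (1 + ε)) := by
  set ψ : ℝ → ℝ := fun r ↦ 2 * (r + 2) * Real.log (1 + b * (r + 2))
  have hlog : ∀ r ≥ 0, 0 ≤ Real.log (1 + b * (r + 2)) := fun r hr ↦
    Real.log_nonneg (by nlinarith)
  have hψ₀ : ∀ r ≥ 0, 0 ≤ ψ r := fun r hr ↦ mul_nonneg (by positivity) (hlog r hr)
  have hψ : MonotoneOn ψ (Ici 0) := fun r (hr : 0 ≤ r) t _ hrt ↦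
    mul_le_mul (by linarith) (Real.log_le_log (by positivity) (by gcongr)) (hlog r hr)
      (by linarith)
  obtain ⟨R, hR⟩ := eventually_atTop.1 (eventually_mul_log_le_rpow hb hε)
  refine ⟨rexp (ψ (max R 0)), fun r hr ↦ ?_⟩
  rw [Real.rpow_def_of_pos (by positivity), ← Real.exp_add, mul_comm]
  refine Real.exp_le_exp.2 ?_
  rcases le_total r (max R 0) with h | h
  · have := hψ hr (mem_Ici.2 (le_max_right R 0)) h
    have := Real.rpow_nonneg hr (1 + ε)
    linarith
  · linarith [hR r ((le_max_left R 0).trans h), hψ₀ _ (le_max_right R 0)]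

/-- For `a ≠ 0` the polar parts `-1/s - 1/(1-s)` of the two completed functions add up to
`1/(s(s-1))`, which the factor `s(s-1)/2` turns into the constant `1/2`. -/
noncomputable def xiQEntire (a : ℝ) (s : ℂ) : ℂ :=
  (1 + s * (s - 1) * (completedHurwitzZetaEven₀ a s + completedCosZeta₀ a s)) / 2

theorem differentiable_xiQEntire (a : ℝ) : Differentiable ℂ (xiQEntire a) :=
  ((differentiable_id.mul (differentiable_id.sub_const 1)).mul
    ((differentiable_completedHurwitzZetaEven₀ _).add
      (differentiable_completedCosZeta₀ _))).const_add 1 |>.div_const 2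

theorem Q_eq_hurwitzZetaEven_add_cosZeta (a : ℝ) (s : ℂ) :
    Q a s = hurwitzZetaEven a s + cosZeta a s := by
  have : ((1 - a : ℝ) : UnitAddCircle) = -a := by simp
  rw [Q, this]
  simp only [hurwitzZeta, expZeta, hurwitzZetaEven_neg, hurwitzZetaOdd_neg, cosZeta_neg,
    sinZeta_neg]
  ring

theorem coe_ne_zero_of_mem_Ioo {a : ℝ} (ha : a ∈ Ioo 0 1) : (a : UnitAddCircle) ≠ 0 := by
  rw [Ne, AddCircle.coe_eq_zero_iff_of_mem_Ico (Ioo_subset_Ico_self ha)]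
  exact ha.1.ne'

theorem xiQEntire_eq_xiQ {a : ℝ} (ha : (a : UnitAddCircle) ≠ 0) {s : ℂ} (hs₁ : s ≠ 1)
    (hs₂ : ∀ n : ℕ, s ≠ -(2 * n)) : xiQEntire a s = xiQ a s := by
  have hs₀ : s ≠ 0 := by simpa using hs₂ 0
  have hΓ : Gammaℝ s ≠ 0 := Gammaℝ_eq_zero_iff.not.2 (not_exists.2 hs₂)
  have hcos : cosZeta a s = completedCosZeta a s / Gammaℝ s := by
    rw [cosZeta, Function.update_of_ne hs₀]
  rw [xiQ, mul_assoc (1 / 2 * _), ← Gammaℝ_def, Q_eq_hurwitzZetaEven_add_cosZeta,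
    hurwitzZetaEven_def_of_ne_or_ne (Or.inr hs₀), hcos, completedHurwitzZetaEven_eq,
    completedCosZeta_eq, if_neg ha, xiQEntire]
  have : 1 - s ≠ 0 := sub_ne_zero.2 hs₁.symm
  field_simp
  ring

theorem exists_norm_xiQEntire_le (a : ℝ) : ∃ C b : ℝ, 0 ≤ C ∧ 0 ≤ b ∧ ∀ s : ℂ,
    ‖xiQEntire a s‖ ≤ C * (1 + b * (‖s‖ + 2)) ^ (2 * (‖s‖ + 2)) := by
  obtain ⟨C, b, hb, h⟩ := exists_norm_completedHurwitzZetaEven₀_add_completedCosZeta₀_le a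
  refine ⟨(1 + |C|) / 2, b, by positivity, by linarith, fun s ↦ ?_⟩
  have hs := norm_nonneg s
  have hbase : 1 ≤ 1 + b * (‖s‖ + 2) := by nlinarith
  set T := (1 + b * (‖s‖ + 2)) ^ (‖s‖ + 2)
  have hT : 1 ≤ T := Real.one_le_rpow hbase (by positivity)
  have hss : ‖s * (s - 1)‖ ≤ T :=
    calc ‖s * (s - 1)‖ ≤ ‖s‖ * (‖s‖ + 1) := by
          rw [norm_mul]
          gcongr
          simpa using norm_sub_le s 1
      _ ≤ (1 + b * (‖s‖ + 2)) ^ (2 : ℝ) := by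
          rw [Real.rpow_two, sq]
          exact mul_le_mul (by nlinarith) (by nlinarith) (by linarith) (by linarith)
      _ ≤ T := Real.rpow_le_rpow_of_exponent_le hbase (by linarith)
  rw [mul_comm 2, Real.rpow_mul (by linarith), Real.rpow_two]
  calc ‖xiQEntire a s‖ ≤ (1 + T * (C * T)) / 2 := by
        rw [xiQEntire, norm_div, RCLike.norm_ofNat]
        gcongr
        refine (norm_add_le _ _).trans ?_
        rw [norm_one, norm_mul]
        gcongr
        exact h s
    _ ≤ (1 + |C|) / 2 * T ^ 2 := by nlinarith [le_abs_self C]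

theorem exists_norm_xiQEntire_le_exp_rpow (a : ℝ) {ε : ℝ} (hε : 0 < ε) :
    ∃ C, ∀ s : ℂ, ‖xiQEntire a s‖ ≤ C * rexp (‖s‖ ^ (1 + ε)) := by
  obtain ⟨C, b, hC, hb, h⟩ := exists_norm_xiQEntire_le a
  obtain ⟨D, hD⟩ := exists_one_add_mul_rpow_le_mul_exp_rpow hb hε
  refine ⟨C * D, fun s ↦ (h s).trans ?_⟩
  rw [mul_assoc]
  gcongr
  exact hD _ (norm_nonneg s)

theorem one_div_pow_div_two_le_re_hurwitzZetaEven {a : ℝ} (ha : 0 < a) {n : ℕ} (hn : 2 ≤ n) :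
    1 / a ^ n / 2 ≤ (hurwitzZetaEven a n).re := by
  have hs : 1 < (n : ℂ).re := by simp only [natCast_re]; exact_mod_cast hn
  have hterm (j : ℤ) :
      reCLM (1 / (↑|(j : ℝ) + a| : ℂ) ^ (n : ℂ) / 2) = 1 / |(j : ℝ) + a| ^ n / 2 := by
    rw [cpow_natCast, reCLM_apply]
    norm_cast
  have hsum := (hasSum_int_hurwitzZetaEven a hs).mapL reCLM
  simp only [hterm] at hsum
  simpa [abs_of_pos ha] using le_hasSum hsum 0 fun j _ ↦ by positivity

theorem norm_cosZeta_natCast_le (a : ℝ) {n : ℕ} (hn : 2 ≤ n) : ‖cosZeta a n‖ ≤ π ^ 2 / 6 := by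
  have hs : 1 < (n : ℂ).re := by simp only [natCast_re]; exact_mod_cast hn
  rw [← (hasSum_nat_cosZeta a hs).tsum_eq]
  refine tsum_of_norm_bounded hasSum_zeta_two fun k ↦ ?_
  rcases k.eq_zero_or_pos with rfl | hk
  · simp [zero_cpow (Nat.cast_ne_zero.2 (by omega : n ≠ 0))]
  · rw [norm_div, norm_real, cpow_natCast, norm_pow, Complex.norm_natCast]
    exact div_le_div₀ zero_le_one (abs_cos_le_one _) (by positivity)
      (pow_le_pow_right₀ (by exact_mod_cast hk) hn)

theorem one_le_re_Q {a : ℝ} (ha : a ∈ Ioc 0 (1 / 2)) {n : ℕ} (hn : 4 ≤ n) : 1 ≤ (Q a n).re := by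
  have hn₂ : 2 ≤ n := by omega
  have hzeta := one_div_pow_div_two_le_re_hurwitzZetaEven ha.1 hn₂
  have hcos := neg_le_of_abs_le ((abs_re_le_norm _).trans (norm_cosZeta_natCast_le a hn₂))
  have hpow : a ^ n ≤ 1 / 16 :=
    calc a ^ n ≤ (1 / 2) ^ n := pow_le_pow_left₀ ha.1.le ha.2 n
      _ ≤ (1 / 2) ^ 4 := pow_le_pow_of_le_one (by norm_num) (by norm_num) hn
      _ = 1 / 16 := by norm_num
  have h8 : 8 ≤ 1 / a ^ n / 2 := by
    rw [div_div, le_div_iff₀ (mul_pos (pow_pos ha.1 n) two_pos)]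
    linarith
  have hπ : π ^ 2 / 6 < 2 := by nlinarith [pi_lt_d2, pi_pos]
  rw [Q_eq_hurwitzZetaEven_add_cosZeta, add_re]
  linarith

theorem xiQ_two_mul_succ (a : ℝ) (m : ℕ) :
    xiQ a (2 * (m + 1) : ℕ) =
      ((m + 1) * (2 * m + 1) * m ! / π ^ (m + 1) : ℝ) * Q a (2 * (m + 1) : ℕ) := by
  have h₁ : ((2 * (m + 1) : ℕ) : ℂ) / 2 = (m : ℂ) + 1 := by push_cast; ring
  have h₂ : (π : ℂ) ^ (-((2 * (m + 1) : ℕ) : ℂ) / 2) = ((π ^ (m + 1))⁻¹ : ℝ) := by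
    rw [neg_div, h₁, cpow_neg, ← Nat.cast_succ, cpow_natCast]
    push_cast
    rfl
  rw [xiQ, h₂, h₁, Complex.Gamma_nat_eq_factorial]
  push_cast
  ring

theorem factorial_div_pi_pow_le_norm_xiQEntire {a : ℝ} (ha : a ∈ Ioc 0 (1 / 2)) {m : ℕ}
    (hm : 1 ≤ m) : (m ! : ℝ) / π ^ (m + 1) ≤ ‖xiQEntire a (2 * (m + 1) : ℕ)‖ := by
  have hs₁ : ((2 * (m + 1) : ℕ) : ℂ) ≠ 1 := by norm_cast; omega
  have hs₂ (n : ℕ) : ((2 * (m + 1) : ℕ) : ℂ) ≠ -(2 * n) := fun h ↦ by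
    have : ((2 * (m + 1) : ℕ) : ℤ) = -(2 * n) := by exact_mod_cast h
    omega
  have hQ : 1 ≤ ‖Q a (2 * (m + 1) : ℕ)‖ :=
    (one_le_re_Q ha (by omega)).trans (re_le_norm _)
  have ha₀ : (a : UnitAddCircle) ≠ 0 := coe_ne_zero_of_mem_Ioo ⟨ha.1, by linarith [ha.2]⟩
  rw [xiQEntire_eq_xiQ ha₀ hs₁ hs₂, xiQ_two_mul_succ, norm_mul, norm_real,
    Real.norm_of_nonneg (by positivity)]
  calc (m ! : ℝ) / π ^ (m + 1) ≤ (m + 1) * (2 * m + 1) * m ! / π ^ (m + 1) * 1 := by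
        rw [mul_one, mul_div_assoc]
        refine le_mul_of_one_le_left (by positivity) ?_
        nlinarith
    _ ≤ _ := by gcongr

theorem not_eventually_factorial_le_mul_pow (A C : ℝ) :
    ¬ ∀ᶠ m in atTop, (m ! : ℝ) ≤ C * A ^ m := by
  intro h
  have hδ : (0 : ℝ) < 1 / (|C| + 1) := by positivity
  obtain ⟨m, hm, hlt⟩ := (h.and ((FloorSemiring.tendsto_pow_div_factorial_atTop A).eventually
    (Metric.ball_mem_nhds 0 hδ))).exists
  rw [dist_zero_right, norm_div, Real.norm_natCast,
    div_lt_div_iff₀ (by positivity) (by positivity), one_mul] at hlt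
  have : C * A ^ m ≤ |C| * ‖A ^ m‖ := by
    rw [Real.norm_eq_abs, ← abs_mul]
    exact le_abs_self _
  nlinarith [norm_nonneg (A ^ m)]

theorem not_exists_norm_xiQEntire_le_exp_rpow {a : ℝ} (ha : a ∈ Ioc 0 (1 / 2)) {ε : ℝ}
    (hε : 0 < ε) : ¬ ∃ C, ∀ s : ℂ, ‖xiQEntire a s‖ ≤ C * rexp (‖s‖ ^ (1 - ε)) := by
  rintro ⟨C, hC⟩
  apply not_eventually_factorial_le_mul_pow (π * rexp 2) (C * (π * rexp 2))
  filter_upwards [eventually_ge_atTop 1] with m hm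
  have h := (factorial_div_pi_pow_le_norm_xiQEntire ha hm).trans (hC _)
  have hC₀ : 0 ≤ C := nonneg_of_mul_nonneg_left ((by positivity : (0 : ℝ) ≤ _).trans h) (exp_pos _)
  have hN : ‖((2 * (m + 1) : ℕ) : ℂ)‖ = 2 * (m + 1) := by
    rw [Complex.norm_natCast]
    push_cast
    ring
  have hexp : rexp (‖((2 * (m + 1) : ℕ) : ℂ)‖ ^ (1 - ε)) ≤ rexp 2 ^ (m + 1) := by
    rw [hN, ← Real.exp_nat_mul]
    refine Real.exp_le_exp.2 ((Real.rpow_le_self_of_one_le (by linarith) (by linarith)).trans ?_)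
    push_cast
    linarith
  rw [div_le_iff₀ (by positivity)] at h
  calc (m ! : ℝ) ≤ C * rexp (‖((2 * (m + 1) : ℕ) : ℂ)‖ ^ (1 - ε)) * π ^ (m + 1) := h
    _ ≤ C * rexp 2 ^ (m + 1) * π ^ (m + 1) := by gcongr
    _ = C * (π * rexp 2) * (π * rexp 2) ^ m := by ring

/-- `ξ_Q(·,a)` extends to an entire function of order exactly `1`. -/
theorem xiQ_entire_of_order_one (a : ℝ) (ha : a ∈ Set.Ioc (0 : ℝ) (1 / 2)) :
    ∃ F : ℂ → ℂ, Differentiable ℂ F ∧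
      (∀ s : ℂ, s ≠ 1 → (∀ n : ℕ, s ≠ -(2 * n)) → F s = xiQ a s) ∧
      (∀ ε > (0 : ℝ), ∃ C : ℝ, ∀ s : ℂ, ‖F s‖ ≤ C * Real.exp (‖s‖ ^ (1 + ε))) ∧
      (∀ ε > (0 : ℝ), ¬∃ C : ℝ, ∀ s : ℂ, ‖F s‖ ≤ C * Real.exp (‖s‖ ^ (1 - ε))) :=
  ⟨xiQEntire a, differentiable_xiQEntire a,
    fun _ hs₁ hs₂ ↦ xiQEntire_eq_xiQ (coe_ne_zero_of_mem_Ioo ⟨ha.1, by linarith [ha.2]⟩) hs₁ hs₂,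
    fun _ hε ↦ exists_norm_xiQEntire_le_exp_rpow a hε,
    fun _ hε ↦ not_exists_norm_xiQEntire_le_exp_rpow ha hε⟩
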